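/- Any closed loop in the graph of reduced decompositions of a permutation w (vertices: reduced words; edges: single commutations or single braid moves) traverses an even number of commutation edges and an even number of braid-move edges. -/

import Mathlib

/-- The length of a permutation is its number of inversions. -/
def permLen {n : ℕ} (w : Equiv.Perm (Fin n)) : ℕ :=
  (Finset.univ.filter (fun p : Fin n × Fin n => p.1 < p.2 ∧ w p.2 < w p.1)).card

/-- The simple transposition `s_a = (a, a+1)` (0-based) in `S_n`. -/
def simpleT (n : ℕ) (a : ℕ) : Equiv.Perm (Fin n) :=
  if h : a + 1 < n then Equiv.swap ⟨a, Nat.lt_of_succ_lt h⟩ ⟨a + 1, h⟩ else 1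

/-- The kind of a move between reduced words. -/
inductive BWMove where
  | comm : BWMove
  | braid : BWMove
deriving DecidableEq

/-- `applyBWMove m l₁ l₂` holds when the word `l₂` (a list of indices of simple
reflections) is obtained from `l₁` by a single commutation (`s_a s_b → s_b s_a` with
`|a − b| ≥ 2`) or a single braid move (`s_a s_{a+1} s_a ↔ s_{a+1} s_a s_{a+1}`). -/
def applyBWMove : BWMove → List ℕ → List ℕ → Prop
  | .comm, l₁, l₂ => ∃ (pre suf : List ℕ) (a b : ℕ),
      (a + 2 ≤ b ∨ b + 2 ≤ a) ∧
      l₁ = pre ++ a :: b :: suf ∧ l₂ = pre ++ b :: a :: suf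
  | .braid, l₁, l₂ => ∃ (pre suf : List ℕ) (a : ℕ),
      (l₁ = pre ++ a :: (a + 1) :: a :: suf ∧ l₂ = pre ++ (a + 1) :: a :: (a + 1) :: suf) ∨
      (l₁ = pre ++ (a + 1) :: a :: (a + 1) :: suf ∧ l₂ = pre ++ a :: (a + 1) :: a :: suf)

/-!
For a word `a₀ ⋯ a_{k-1}` let `tᵢ = s_{a₀} ⋯ s_{aᵢ₋₁} s_{aᵢ} s_{aᵢ₋₁} ⋯ s_{a₀}` be its left
inversion sequence. For a reduced word the `tᵢ` are pairwise distinct (if `tᵢ = tⱼ`, deleting two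
letters gives a shorter word for the same permutation), and a commutation or braid move at
position `m` permutes the sequence by the transposition of `m, m + 1` or of `m, m + 2`. Around a
loop the sequence of the starting word is therefore carried to itself by a permutation of sign
`(-1) ^ (number of moves)`, which must be the identity, so the number of moves is even. A braid
move changes the sum of the letters by `±1` and a commutation does not change it, so the number of
braid moves is even too.
-/

open Equiv

section InvSeq

variable {G α : Type*} [Group G] (s : α → G)

/-- The left inversion sequence `i ↦ tᵢ`: an index-function version of
`CoxeterSystem.leftInvSeq`. -/
def leftInvSeq : List α → ℕ → G
  | [], _ => 1
  | a :: _, 0 => s a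
  | a :: l, i + 1 => MulAut.conj (s a) (leftInvSeq l i)

@[simp] lemma leftInvSeq_cons_zero (a : α) (l : List α) : leftInvSeq s (a :: l) 0 = s a := rfl

@[simp] lemma leftInvSeq_cons_succ (a : α) (l : List α) (i : ℕ) :
    leftInvSeq s (a :: l) (i + 1) = MulAut.conj (s a) (leftInvSeq s l i) := rfl

lemma leftInvSeq_mul_prod_eraseIdx {l : List α} {j : ℕ} (hj : j < l.length) :
    leftInvSeq s l j * ((l.eraseIdx j).map s).prod = (l.map s).prod := by
  induction l generalizing j with
  | nil => simp at hj
  | cons a l ih =>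
    cases j with
    | zero => simp
    | succ j =>
      simp only [leftInvSeq_cons_succ, MulAut.conj_apply, List.eraseIdx_cons_succ, List.map_cons,
        List.prod_cons]
      rw [← ih (by simpa using hj)]
      group

lemma leftInvSeq_append_swap {l l' : List α} {p q : ℕ}
    (h : ∀ j, leftInvSeq s l' j = leftInvSeq s l (swap p q j)) (pre : List α) (j : ℕ) :
    leftInvSeq s (pre ++ l') j
      = leftInvSeq s (pre ++ l) (swap (pre.length + p) (pre.length + q) j) := by
  induction pre generalizing j with
  | nil => simpa using h j
  | cons a pre ih =>
    cases j with
    | zero =>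
      rw [swap_apply_of_ne_of_ne (by simp; omega) (by simp; omega)]
      rfl
    | succ j =>
      have hshift : swap ((a :: pre).length + p) ((a :: pre).length + q) (j + 1)
          = swap (pre.length + p) (pre.length + q) j + 1 := by
        rw [← (add_left_injective 1).swap_apply]
        simp only [List.length_cons]
        congr 2 <;> omega
      rw [hshift, List.cons_append, List.cons_append, leftInvSeq_cons_succ,
        leftInvSeq_cons_succ, ih]

lemma leftInvSeq_swap_of_commute {a b : α} (h : Commute (s a) (s b)) (suf : List α) (j : ℕ) :
    leftInvSeq s (b :: a :: suf) j = leftInvSeq s (a :: b :: suf) (swap 0 1 j) := by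
  match j with
  | 0 => simpa using h.mul_inv_cancel.symm
  | 1 => simpa using h.symm.mul_inv_cancel
  | j + 2 =>
    rw [swap_apply_of_ne_of_ne (by omega) (by omega)]
    simp only [leftInvSeq_cons_succ, ← MulAut.mul_apply, ← map_mul, h.eq]

lemma leftInvSeq_swap_of_braid (hs : ∀ a, s a * s a = 1) {a b : α}
    (h : s a * s b * s a = s b * s a * s b) (suf : List α) (j : ℕ) :
    leftInvSeq s (b :: a :: b :: suf) j = leftInvSeq s (a :: b :: a :: suf) (swap 0 2 j) := by
  have hinv : ∀ x, (s x)⁻¹ = s x := fun x => inv_eq_of_mul_eq_one_right (hs x)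
  have hcancel : ∀ x g, s x * (s x * g) = g := fun x g => by rw [← mul_assoc, hs, one_mul]
  match j with
  | 0 =>
    simp only [leftInvSeq_cons_zero, leftInvSeq_cons_succ, MulAut.conj_apply, hinv,
      swap_apply_left]
    rw [← h]
    simp only [mul_assoc, hcancel, hs, mul_one]
  | 1 =>
    rw [swap_apply_of_ne_of_ne (by omega) (by omega)]
    simpa [hinv] using h.symm
  | 2 =>
    simp only [leftInvSeq_cons_zero, leftInvSeq_cons_succ, MulAut.conj_apply, hinv,
      swap_apply_right]
    rw [h]
    simp only [mul_assoc, hcancel, hs, mul_one]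
  | j + 3 =>
    rw [swap_apply_of_ne_of_ne (by omega) (by omega)]
    simp only [leftInvSeq_cons_succ, ← MulAut.mul_apply, ← map_mul, ← mul_assoc, h]

def IsReducedWord (l : List α) : Prop :=
  ∀ l' : List α, (l'.map s).prod = (l.map s).prod → l.length ≤ l'.length

variable {s}

namespace IsReducedWord

lemma of_cons {a : α} {l : List α} (h : IsReducedWord s (a :: l)) : IsReducedWord s l :=
  fun l' hl' => Nat.le_of_succ_le_succ (h (a :: l') (by simp [hl']))

lemma ne_one {l : List α} (h : IsReducedWord s l) {a : α} (ha : a ∈ l) : s a ≠ 1 := by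
  induction l with
  | nil => simp at ha
  | cons b l ih =>
    rcases List.mem_cons.mp ha with rfl | ha
    · intro h1
      simpa using h l (by simp [h1])
    · exact ih h.of_cons ha

lemma leftInvSeq_ne_of_cons (hs : ∀ a, s a * s a = 1) {a : α} {l : List α}
    (h : IsReducedWord s (a :: l)) {j : ℕ} (hj : j < l.length) : leftInvSeq s l j ≠ s a := by
  intro hja
  have hdel : ((l.eraseIdx j).map s).prod = ((a :: l).map s).prod := by
    rw [List.map_cons, List.prod_cons, ← leftInvSeq_mul_prod_eraseIdx s hj, hja, ← mul_assoc,
      hs, one_mul]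
  have := h _ hdel
  rw [List.length_eraseIdx_of_lt hj, List.length_cons] at this
  omega

lemma injOn_leftInvSeq (hs : ∀ a, s a * s a = 1) {l : List α} (h : IsReducedWord s l) :
    Set.InjOn (leftInvSeq s l) (Set.Iio l.length) := by
  induction l with
  | nil => simp
  | cons a l ih =>
    have hfix : MulAut.conj (s a) (s a) = s a := by simp [MulAut.conj_apply]
    have hne : ∀ j ∈ Set.Iio l.length, MulAut.conj (s a) (leftInvSeq s l j) ≠ s a :=
      fun j hj => by
        rw [Ne, (MulAut.conj (s a)).injective.eq_iff' hfix]
        exact h.leftInvSeq_ne_of_cons hs hj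
    rintro (_ | i) hi (_ | j) hj hij
    · rfl
    · exact absurd hij.symm (hne j (Nat.succ_lt_succ_iff.mp hj))
    · exact absurd hij (hne i (Nat.succ_lt_succ_iff.mp hi))
    · exact congrArg (· + 1) (ih h.of_cons (Nat.succ_lt_succ_iff.mp hi)
        (Nat.succ_lt_succ_iff.mp hj) ((MulAut.conj (s a)).injective hij))

end IsReducedWord

end InvSeq

lemma even_of_swap_loop {ι β : Type*} [Fintype ι] [DecidableEq ι] {f : ℕ → ι → β} {k : ℕ}
    (hinj : Function.Injective (f 0)) (hloop : f k = f 0)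
    (hstep : ∀ t < k, ∃ i j, i ≠ j ∧ f (t + 1) = f t ∘ swap i j) : Even k := by
  have hperm : ∀ t ≤ k, ∃ π : Perm ι, Perm.sign π = (-1) ^ t ∧ f t = f 0 ∘ π := by
    intro t ht
    induction t with
    | zero => exact ⟨1, by simp, rfl⟩
    | succ t ih =>
      obtain ⟨π, hsign, hπ⟩ := ih (by omega)
      obtain ⟨i, j, hij, hswap⟩ := hstep t (by omega)
      refine ⟨π * swap i j, ?_, ?_⟩
      · rw [Perm.sign_mul, Perm.sign_swap hij, hsign, pow_succ, mul_neg_one]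
      · rw [hswap, hπ, Perm.coe_mul, Function.comp_assoc]
  obtain ⟨π, hsign, hπ⟩ := hperm k le_rfl
  have hπ1 : π = 1 := Perm.ext fun x => hinj (congrFun (hloop.symm.trans hπ) x).symm
  rw [hπ1, Perm.sign_one, eq_comm] at hsign
  exact (neg_one_pow_eq_one_iff_even (by decide)).mp hsign

lemma even_of_swap_loop_of_injOn {β : Type*} {f : ℕ → ℕ → β} {k L : ℕ}
    (hinj : Set.InjOn (f 0) (Set.Iio L)) (hloop : f k = f 0)
    (hstep : ∀ t < k, ∃ p q, p ≠ q ∧ p < L ∧ q < L ∧ ∀ j, f (t + 1) j = f t (swap p q j)) :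
    Even k := by
  refine even_of_swap_loop (f := fun t (i : Fin L) => f t i)
    (fun i j hij => Fin.ext (hinj i.2 j.2 hij)) (by simp only [hloop]) fun t ht => ?_
  obtain ⟨p, q, hpq, hp, hq, hswap⟩ := hstep t ht
  refine ⟨⟨p, hp⟩, ⟨q, hq⟩, by simpa using hpq, funext fun i => ?_⟩
  rw [Function.comp_apply, hswap]
  exact congrArg _ (Fin.val_injective.swap_apply ⟨p, hp⟩ ⟨q, hq⟩ i)

lemma even_count_of_loop {β : Type*} [DecidableEq β] (b : β) (ms : List β) (x : ℕ → ZMod 2)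
    (hloop : x ms.length = x 0)
    (hstep : ∀ t (ht : t < ms.length), x (t + 1) = x t + if ms[t] = b then 1 else 0) :
    Even (ms.count b) := by
  suffices h : x ms.length = x 0 + ms.count b by
    rwa [hloop, left_eq_add, ZMod.natCast_eq_zero_iff_even] at h
  clear hloop
  induction ms generalizing x with
  | nil => simp
  | cons c ms ih =>
    rw [List.length_cons, ih (fun t => x (t + 1)) fun t ht => hstep (t + 1) (by simpa using ht),
      hstep 0 (by simp), List.count_cons]
    by_cases hc : c = b
    · simp [hc]
      ring
    · simp [hc]

lemma simpleT_mul_self (n a : ℕ) : simpleT n a * simpleT n a = 1 := by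
  unfold simpleT
  split_ifs
  · exact swap_mul_self _ _
  · exact one_mul 1

lemma lt_of_simpleT_ne_one {n a : ℕ} (h : simpleT n a ≠ 1) : a + 1 < n := by
  by_contra ha
  exact h (dif_neg ha)

lemma simpleT_commute {n a b : ℕ} (h : a + 2 ≤ b ∨ b + 2 ≤ a) :
    Commute (simpleT n a) (simpleT n b) := by
  unfold simpleT
  split_ifs
  · exact (Perm.disjoint_swap_swap (by simp [Fin.ext_iff]; omega)).commute
  · exact Commute.one_right _
  · exact Commute.one_left _
  · exact Commute.one_left _

lemma simpleT_braid {n a : ℕ} (h : a + 2 < n) :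
    simpleT n a * simpleT n (a + 1) * simpleT n a
      = simpleT n (a + 1) * simpleT n a * simpleT n (a + 1) := by
  unfold simpleT
  rw [dif_pos (by omega), dif_pos h]
  ext x
  simp only [Perm.mul_apply, swap_apply_def]
  split_ifs <;> simp only [Fin.ext_iff, not_true] at * <;> omega

lemma permLen_one (n : ℕ) : permLen (1 : Perm (Fin n)) = 0 :=
  Finset.card_eq_zero.mpr (Finset.filter_eq_empty_iff.mpr fun _ _ h => lt_asymm h.1 h.2)

lemma lt_or_eq_of_swap_lt_swap {n : ℕ} {i j x y : Fin n} (hij : (j : ℕ) = i + 1)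
    (hxy : swap i j y < swap i j x) : y < x ∨ (x = i ∧ y = j) := by
  simp only [swap_apply_def] at hxy
  split_ifs at hxy <;> simp only [Fin.lt_def, Fin.ext_iff] at * <;> omega

lemma permLen_simpleT_mul_le (n a : ℕ) (v : Perm (Fin n)) :
    permLen (simpleT n a * v) ≤ permLen v + 1 := by
  unfold simpleT
  split_ifs with h
  · set i : Fin n := ⟨a, Nat.lt_of_succ_lt h⟩
    set j : Fin n := ⟨a + 1, h⟩
    have hsub : Finset.univ.filter (fun p : Fin n × Fin n =>
          p.1 < p.2 ∧ (swap i j * v) p.2 < (swap i j * v) p.1)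
        ⊆ insert (v⁻¹ i, v⁻¹ j)
          (Finset.univ.filter (fun p : Fin n × Fin n => p.1 < p.2 ∧ v p.2 < v p.1)) := by
      intro p hp
      rw [Finset.mem_filter_univ] at hp
      rcases lt_or_eq_of_swap_lt_swap rfl hp.2 with hlt | ⟨hx, hy⟩
      · exact Finset.mem_insert_of_mem ((Finset.mem_filter_univ _).mpr ⟨hp.1, hlt⟩)
      · rw [show p = (v⁻¹ i, v⁻¹ j) from
          Prod.ext (Perm.eq_inv_iff_eq.mpr hx) (Perm.eq_inv_iff_eq.mpr hy)]
        exact Finset.mem_insert_self _ _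
    exact (Finset.card_le_card hsub).trans (Finset.card_insert_le _ _)
  · simp

lemma permLen_prod_le (n : ℕ) (l : List ℕ) : permLen (l.map (simpleT n)).prod ≤ l.length := by
  induction l with
  | nil => simp [permLen_one]
  | cons a l ih => simpa using (permLen_simpleT_mul_le n a _).trans (by omega)

lemma isReducedWord_of_permLen_eq {n : ℕ} {l : List ℕ}
    (h : permLen (l.map (simpleT n)).prod = l.length) : IsReducedWord (simpleT n) l :=
  fun l' hl' => h ▸ hl' ▸ permLen_prod_le n l'

lemma IsReducedWord.lt_of_mem {n : ℕ} {l : List ℕ} (h : IsReducedWord (simpleT n) l)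
    {a : ℕ} (ha : a ∈ l) : a + 1 < n :=
  lt_of_simpleT_ne_one (h.ne_one ha)

lemma BWMove.count_comm_add_count_braid (ms : List BWMove) :
    ms.count .comm + ms.count .braid = ms.length := by
  induction ms with
  | nil => rfl
  | cons m ms ih => cases m <;> simp <;> omega

lemma applyBWMove.sum_eq {m : BWMove} {l l' : List ℕ} (h : applyBWMove m l l') :
    (l'.sum : ZMod 2) = l.sum + if m = .braid then 1 else 0 := by
  cases m with
  | comm =>
    obtain ⟨pre, suf, a, b, -, rfl, rfl⟩ := h
    simp only [List.sum_append, List.sum_cons, reduceCtorEq, if_false]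
    push_cast
    ring
  | braid =>
    obtain ⟨pre, suf, a, ⟨rfl, rfl⟩ | ⟨rfl, rfl⟩⟩ := h <;>
      simp only [List.sum_append, List.sum_cons, if_true] <;> push_cast
    · ring
    · ring_nf
      reduce_mod_char

lemma applyBWMove.exists_swap_leftInvSeq {n : ℕ} {m : BWMove} {l l' : List ℕ}
    (hl : ∀ a ∈ l, a + 1 < n) (h : applyBWMove m l l') :
    ∃ p q, p ≠ q ∧ p < l.length ∧ q < l.length ∧
      ∀ j, leftInvSeq (simpleT n) l' j = leftInvSeq (simpleT n) l (swap p q j) := by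
  cases m with
  | comm =>
    obtain ⟨pre, suf, a, b, hab, rfl, rfl⟩ := h
    refine ⟨pre.length, pre.length + 1, by omega, by simp, by simp, fun j => ?_⟩
    simpa using leftInvSeq_append_swap _
      (leftInvSeq_swap_of_commute _ (simpleT_commute hab) suf) pre j
  | braid =>
    obtain ⟨pre, suf, a, ⟨rfl, rfl⟩ | ⟨rfl, rfl⟩⟩ := h
    all_goals
      have hbraid := simpleT_braid (n := n) (a := a) (by have := hl (a + 1) (by simp); omega)
      refine ⟨pre.length, pre.length + 2, by omega, by simp, by simp, fun j => ?_⟩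
    · simpa using leftInvSeq_append_swap _
        (leftInvSeq_swap_of_braid _ (simpleT_mul_self n) hbraid suf) pre j
    · simpa using leftInvSeq_append_swap _
        (leftInvSeq_swap_of_braid _ (simpleT_mul_self n) hbraid.symm suf) pre j

/-- Any closed loop in the graph of reduced decompositions of `w` (vertices: reduced
words, edges: single commutations or single braid moves) traverses an even number of
commutation edges and an even number of braid-move edges. -/
theorem loop_even_moves {n : ℕ} (w : Equiv.Perm (Fin n)) (ms : List BWMove)
    (ws : ℕ → List ℕ)
    (hloop : ws ms.length = ws 0)
    (hred : ∀ t ≤ ms.length,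
      ((ws t).map (simpleT n)).prod = w ∧ (ws t).length = permLen w)
    (hstep : ∀ t : ℕ, ∀ ht : t < ms.length,
      applyBWMove (ms.get ⟨t, ht⟩) (ws t) (ws (t + 1))) :
    Even (ms.count BWMove.comm) ∧ Even (ms.count BWMove.braid) := by
  have hreduced : ∀ t ≤ ms.length, IsReducedWord (simpleT n) (ws t) := fun t ht =>
    isReducedWord_of_permLen_eq (by rw [(hred t ht).1, (hred t ht).2])
  have hmoves : Even ms.length := by
    refine even_of_swap_loop_of_injOn (f := fun t => leftInvSeq (simpleT n) (ws t))
      (L := permLen w) ?_ (by simp only [hloop]) fun t ht => ?_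
    · simpa only [(hred 0 (Nat.zero_le _)).2] using
        (hreduced 0 (Nat.zero_le _)).injOn_leftInvSeq (simpleT_mul_self n)
    · simpa only [(hred t ht.le).2] using (hstep t ht).exists_swap_leftInvSeq
        fun a ha => (hreduced t ht.le).lt_of_mem ha
  have hbraid : Even (ms.count .braid) :=
    even_count_of_loop _ ms (fun t => ((ws t).sum : ZMod 2)) (by simp only [hloop])
      fun t ht => (hstep t ht).sum_eq
  have hcount := BWMove.count_comm_add_count_braid ms
  exact ⟨(Nat.even_add.mp (hcount ▸ hmoves)).mpr hbraid, hbraid⟩
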